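/- Let G be a weighted graph with nonnegative real edge weights and let e = ab be an edge of G with weight ω_e. Let G' be the weighted graph obtained from G by deleting the edge e and adding two new vertices a', b' together with three new edges aa', a'b', b'b with weights √ω_e, 1, √ω_e respectively, all other weights unchanged. Then M(G) = M(G'). -/
import Mathlib


open Finset

/-- `N` is (the edge set of) a perfect matching of the induced subgraph of `G`
on the vertex set `S`: all edges of `N` are edges of `G` with both endpoints in `S`,
and every vertex of `S` lies in exactly one edge of `N`. -/
def IsPM {V : Type} [Fintype V] [DecidableEq V] (G : SimpleGraph V) (S : Finset V)
    (N : Finset (Sym2 V)) : Prop :=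
  (∀ e ∈ N, e ∈ G.edgeSet) ∧ (∀ e ∈ N, ∀ x ∈ e, x ∈ S) ∧
    (∀ v ∈ S, ∃! e : Sym2 V, e ∈ N ∧ v ∈ e)

open scoped Classical in
/-- The sum of the weights of all perfect matchings of the induced subgraph of the
weighted graph `(G, w)` on the vertex set `S`, the weight of a perfect matching being
the product of the weights of its edges. -/
noncomputable def Mw {V : Type} [Fintype V] [DecidableEq V] (G : SimpleGraph V)
    (w : Sym2 V → ℝ) (S : Finset V) : ℝ :=
  ∑ N ∈ Finset.univ.filter (fun N => IsPM G S N), ∏ e ∈ N, w e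

open scoped Classical in
/-- The number of perfect matchings of the induced subgraph of `G` on the vertex set `S`. -/
noncomputable def Mn {V : Type} [Fintype V] [DecidableEq V] (G : SimpleGraph V)
    (S : Finset V) : ℕ :=
  (Finset.univ.filter (fun N => IsPM G S N)).card

/-- A (straight-line) planar embedding of the graph `G`: each vertex is placed at a
point of the plane, edges are drawn as straight segments, two distinct edges meet only
in images of common endpoints, and no vertex lies on the drawing of an edge it does not
belong to. -/
structure PlaneEmbedding {V : Type} [Fintype V] (G : SimpleGraph V) where
  pos : V → ℝ × ℝ
  inj : Function.Injective pos
  edges_meet : ∀ u v x y : V, G.Adj u v → G.Adj x y → s(u, v) ≠ s(x, y) →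
    segment ℝ (pos u) (pos v) ∩ segment ℝ (pos x) (pos y) ⊆ pos '' (({u, v} : Set V) ∩ {x, y})
  vertex_off_edges : ∀ u v t : V, G.Adj u v → t ≠ u → t ≠ v →
    pos t ∉ segment ℝ (pos u) (pos v)

/-- The drawing of a plane graph: the union of the (closed) segments representing the edges. -/
def PlaneEmbedding.drawing {V : Type} [Fintype V] {G : SimpleGraph V}
    (P : PlaneEmbedding G) : Set (ℝ × ℝ) :=
  ⋃ (u : V) (v : V) (_ : G.Adj u v), segment ℝ (P.pos u) (P.pos v)

/-- A face of a plane graph is a connected component of the complement of its drawing. -/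
def PlaneEmbedding.IsFace {V : Type} [Fintype V] {G : SimpleGraph V}
    (P : PlaneEmbedding G) (F : Set (ℝ × ℝ)) : Prop :=
  ∃ p ∈ (P.drawing)ᶜ, F = connectedComponentIn (P.drawing)ᶜ p

/-- The vertices `vs 0, vs 1, ..., vs (m-1)` appear in this cyclic order on the face `F`
of the plane graph: there is a closed curve `φ` (parametrized with period `1` and
injective on a period) passing through the points `pos (vs i)` in this cyclic order and
otherwise lying entirely inside the face `F`. -/
def PlaneEmbedding.CyclicOnFace {V : Type} [Fintype V] {G : SimpleGraph V}
    (P : PlaneEmbedding G) (F : Set (ℝ × ℝ)) {m : ℕ} (vs : Fin m → V) : Prop :=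
  ∃ (φ : ℝ → ℝ × ℝ) (t : Fin m → ℝ),
    Continuous φ ∧ (∀ s : ℝ, φ (s + 1) = φ s) ∧
    (∀ s₁ ∈ Set.Ico (0 : ℝ) 1, ∀ s₂ ∈ Set.Ico (0 : ℝ) 1, φ s₁ = φ s₂ → s₁ = s₂) ∧
    StrictMono t ∧ (∀ i, t i ∈ Set.Ico (0 : ℝ) 1) ∧
    (∀ i, φ (t i) = P.pos (vs i)) ∧
    (∀ s : ℝ, φ s ∉ P.pos '' Set.range vs → φ s ∈ F)

/-- The interleaving `a 0, b 0, a 1, b 1, ..., a (k-1), b (k-1)` of two sequences of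
vertices, as a sequence indexed by `Fin (2 * k)`. -/
def interleave {V : Type} {k : ℕ} (a b : Fin k → V) : Fin (2 * k) → V := fun i =>
  if i.val % 2 = 0 then a ⟨i.val / 2, by have := i.isLt; omega⟩
  else b ⟨i.val / 2, by have := i.isLt; omega⟩

/-- **Lemma 3.1** (Ciucu). Let `G` be a weighted graph with nonnegative edge weights and
let `e = ab` be an edge of `G`. Let `G'` be obtained from `G` by deleting the edge `e`
and adding two new vertices `a', b'` together with the three new edges `aa', a'b', b'b`
of weights `√ω_e, 1, √ω_e` respectively (all other weights unchanged, `ι` being the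
inclusion of the vertices of `G` into those of `G'`). Then `M(G) = M(G')`. -/
theorem edge_subdivision_invariance {V V' : Type} [Fintype V] [DecidableEq V]
    [Fintype V'] [DecidableEq V']
    (G : SimpleGraph V) (w : Sym2 V → ℝ) (hw : ∀ e ∈ G.edgeSet, 0 ≤ w e)
    (a b : V) (hab : G.Adj a b)
    (ι : V → V') (hι : Function.Injective ι)
    (a' b' : V') (ha' : a' ∉ Set.range ι) (hb' : b' ∉ Set.range ι) (hab' : a' ≠ b')
    (hcover : ∀ x : V', x ∈ Set.range ι ∨ x = a' ∨ x = b')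
    (G' : SimpleGraph V')
    (hGG' : ∀ u v : V, G'.Adj (ι u) (ι v) ↔ (G.Adj u v ∧ s(u, v) ≠ s(a, b)))
    (ha'adj : ∀ x : V', G'.Adj a' x ↔ (x = ι a ∨ x = b'))
    (hb'adj : ∀ x : V', G'.Adj b' x ↔ (x = ι b ∨ x = a'))
    (w' : Sym2 V' → ℝ)
    (hw'old : ∀ u v : V, G.Adj u v → s(u, v) ≠ s(a, b) → w' s(ι u, ι v) = w s(u, v))
    (hw'a : w' s(ι a, a') = Real.sqrt (w s(a, b)))
    (hw'mid : w' s(a', b') = 1)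
    (hw'b : w' s(b', ι b) = Real.sqrt (w s(a, b))) :
    Mw G w Finset.univ = Mw G' w' Finset.univ := by
  classical
  have hwab : (0:ℝ) ≤ w s(a,b) := hw _ ((G.mem_edgeSet).mpr hab)
  have hιa_a' : ι a ≠ a' := fun h => ha' ⟨a, h⟩
  have hιb_a' : ι b ≠ a' := fun h => ha' ⟨b, h⟩
  have hιa_b' : ι a ≠ b' := fun h => hb' ⟨a, h⟩
  have hιb_b' : ι b ≠ b' := fun h => hb' ⟨b, h⟩
  set m : Sym2 V → Sym2 V' := Sym2.map ι with hm
  have hminj : Function.Injective m := Sym2.map.injective hι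
  have ha'nm : ∀ e : Sym2 V, a' ∉ m e := by
    intro e he
    obtain ⟨y, _, hy2⟩ := Sym2.mem_map.mp he
    exact ha' ⟨y, hy2⟩
  have hb'nm : ∀ e : Sym2 V, b' ∉ m e := by
    intro e he
    obtain ⟨y, _, hy2⟩ := Sym2.mem_map.mp he
    exact hb' ⟨y, hy2⟩
  have hmem_m : ∀ (e : Sym2 V) (v : V), ι v ∈ m e ↔ v ∈ e := by
    intro e v
    constructor
    · intro h
      obtain ⟨y, hy, hy2⟩ := Sym2.mem_map.mp h
      exact hι hy2 ▸ hy
    · intro h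
      exact Sym2.mem_map.mpr ⟨v, h, rfl⟩
  have hwm : ∀ e : Sym2 V, e ∈ G.edgeSet → e ≠ s(a,b) → w' (m e) = w e := by
    intro e
    induction e using Sym2.ind with
    | _ u v =>
      intro he hne
      rw [hm, Sym2.map_pair_eq]
      exact hw'old u v ((G.mem_edgeSet).mp he) hne
  have hmedge : ∀ e : Sym2 V, e ∈ G.edgeSet → e ≠ s(a,b) → m e ∈ G'.edgeSet := by
    intro e
    induction e using Sym2.ind with
    | _ u v =>
      intro he hne
      rw [hm, Sym2.map_pair_eq, SimpleGraph.mem_edgeSet]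
      exact (hGG' u v).mpr ⟨(G.mem_edgeSet).mp he, hne⟩
  have hmedge' : ∀ e : Sym2 V, m e ∈ G'.edgeSet → e ∈ G.edgeSet ∧ e ≠ s(a,b) := by
    intro e
    induction e using Sym2.ind with
    | _ u v =>
      intro he
      rw [hm, Sym2.map_pair_eq, SimpleGraph.mem_edgeSet] at he
      obtain ⟨h1, h2⟩ := (hGG' u v).mp he
      exact ⟨(G.mem_edgeSet).mpr h1, h2⟩
  have ha'edge : ∀ e' ∈ G'.edgeSet, a' ∈ e' → e' = s(a', ι a) ∨ e' = s(a', b') := by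
    intro e' he' hmem
    induction e' using Sym2.ind with
    | _ x y =>
      rw [SimpleGraph.mem_edgeSet] at he'
      rw [Sym2.mem_iff] at hmem
      rcases hmem with h | h
      · subst h
        rcases (ha'adj y).mp he' with h | h <;> subst h
        · left; rfl
        · right; rfl
      · subst h
        rcases (ha'adj x).mp he'.symm with h | h <;> subst h
        · left; exact Sym2.eq_swap
        · right; exact Sym2.eq_swap
  have hb'edge : ∀ e' ∈ G'.edgeSet, b' ∈ e' → e' = s(b', ι b) ∨ e' = s(a', b') := by
    intro e' he' hmem
    induction e' using Sym2.ind with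
    | _ x y =>
      rw [SimpleGraph.mem_edgeSet] at he'
      rw [Sym2.mem_iff] at hmem
      rcases hmem with h | h
      · subst h
        rcases (hb'adj y).mp he' with h | h <;> subst h
        · left; rfl
        · right; exact Sym2.eq_swap
      · subst h
        rcases (hb'adj x).mp he'.symm with h | h <;> subst h
        · left; exact Sym2.eq_swap
        · right; rfl
  have hedgeR : ∀ e' ∈ G'.edgeSet, a' ∉ e' → b' ∉ e' → ∃ e : Sym2 V, m e = e' := by
    intro e' he' ha'e hb'e
    induction e' using Sym2.ind with
    | _ x y =>
      rw [Sym2.mem_iff] at ha'e hb'e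
      push_neg at ha'e hb'e
      have hx : x ∈ Set.range ι := by
        rcases hcover x with h | h | h
        · exact h
        · exact absurd h.symm ha'e.1
        · exact absurd h.symm hb'e.1
      have hy : y ∈ Set.range ι := by
        rcases hcover y with h | h | h
        · exact h
        · exact absurd h.symm ha'e.2
        · exact absurd h.symm hb'e.2
      obtain ⟨u, hu⟩ := hx
      obtain ⟨v, hv⟩ := hy
      exact ⟨s(u, v), by rw [hm, Sym2.map_pair_eq, hu, hv]⟩
  have hstruct : ∀ N' : Finset (Sym2 V'), IsPM G' Finset.univ N' →
      (s(a',b') ∈ N' ∧ s(ι a, a') ∉ N' ∧ s(b', ι b) ∉ N') ∨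
      (s(a',b') ∉ N' ∧ s(ι a, a') ∈ N' ∧ s(b', ι b) ∈ N') := by
    intro N' hN'
    obtain ⟨hE, -, hU⟩ := hN'
    obtain ⟨ea, ⟨hea, haea⟩, huniq_a⟩ := hU a' (Finset.mem_univ _)
    obtain ⟨eb, ⟨heb, hbeb⟩, huniq_b⟩ := hU b' (Finset.mem_univ _)
    rcases ha'edge ea (hE ea hea) haea with h | h
    · -- ea = s(a', ι a) : case (ii)
      subst h
      rcases hb'edge eb (hE eb heb) hbeb with h2 | h2
      · subst h2
        right
        refine ⟨?_, by rw [Sym2.eq_swap]; exact hea, heb⟩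
        intro hc
        have h3 := huniq_a s(a',b') ⟨hc, Sym2.mem_mk_left _ _⟩
        rw [Sym2.eq_iff] at h3
        rcases h3 with ⟨-, h3⟩ | ⟨h3, -⟩
        · exact hιa_b' h3.symm
        · exact hιa_a' h3.symm
      · exfalso
        have h3 := huniq_a eb ⟨heb, by rw [h2]; exact Sym2.mem_mk_left _ _⟩
        rw [h2, Sym2.eq_iff] at h3
        rcases h3 with ⟨-, h3⟩ | ⟨h3, -⟩
        · exact hιa_b' h3.symm
        · exact hιa_a' h3.symm
    · -- ea = s(a', b') : case (i)
      subst h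
      left
      refine ⟨hea, ?_, ?_⟩
      · intro hc
        have h3 := huniq_a s(ι a, a') ⟨hc, Sym2.mem_mk_right _ _⟩
        rw [Sym2.eq_iff] at h3
        rcases h3 with ⟨h3, -⟩ | ⟨h3, -⟩
        · exact hιa_a' h3
        · exact hιa_b' h3
      · intro hc
        have h3 := huniq_b s(b', ι b) ⟨hc, Sym2.mem_mk_left _ _⟩
        have h4 := huniq_b s(a', b') ⟨hea, Sym2.mem_mk_right _ _⟩
        have h5 : s(b', ι b) = s(a', b') := h3.trans h4.symm
        rw [Sym2.eq_iff] at h5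
        rcases h5 with ⟨h5, -⟩ | ⟨-, h5⟩
        · exact hab' h5.symm
        · exact hιb_a' h5
  set Φ : Finset (Sym2 V) → Finset (Sym2 V') := fun N =>
    if s(a,b) ∈ N then ((N.erase s(a,b)).image m) ∪ {s(ι a, a'), s(b', ι b)}
    else (N.image m) ∪ {s(a', b')} with hΦ
  set Ψ : Finset (Sym2 V') → Finset (Sym2 V) := fun N' =>
    if s(a', b') ∈ N' then Finset.univ.filter (fun e => m e ∈ N')
    else insert s(a,b) (Finset.univ.filter (fun e => m e ∈ N')) with hΨ
  have hΦpos : ∀ N, s(a,b) ∈ N →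
      Φ N = ((N.erase s(a,b)).image m) ∪ {s(ι a, a'), s(b', ι b)} := by
    intro N h; simp only [hΦ, if_pos h]
  have hΦneg : ∀ N, s(a,b) ∉ N → Φ N = (N.image m) ∪ {s(a', b')} := by
    intro N h; simp only [hΦ, if_neg h]
  have hΨpos : ∀ N', s(a', b') ∈ N' →
      Ψ N' = Finset.univ.filter (fun e => m e ∈ N') := by
    intro N' h; simp only [hΨ, if_pos h]
  have hΨneg : ∀ N', s(a', b') ∉ N' →
      Ψ N' = insert s(a,b) (Finset.univ.filter (fun e => m e ∈ N')) := by
    intro N' h; simp only [hΨ, if_neg h]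
  have hΦmem1 : ∀ N, s(a,b) ∈ N → ∀ e' : Sym2 V',
      (e' ∈ Φ N ↔ (∃ e ∈ N.erase s(a,b), m e = e') ∨ e' = s(ι a, a') ∨ e' = s(b', ι b)) := by
    intro N h e'
    rw [hΦpos N h]
    simp only [Finset.mem_union, Finset.mem_image, Finset.mem_insert, Finset.mem_singleton]
  have hΦmem2 : ∀ N, s(a,b) ∉ N → ∀ e' : Sym2 V',
      (e' ∈ Φ N ↔ (∃ e ∈ N, m e = e') ∨ e' = s(a', b')) := by
    intro N h e'
    rw [hΦneg N h]
    simp only [Finset.mem_union, Finset.mem_image, Finset.mem_singleton]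
  unfold Mw
  refine Finset.sum_nbij' Φ Ψ ?_ ?_ ?_ ?_ ?_
  · -- Φ maps PMs of G to PMs of G'
    intro N hN
    simp only [Finset.mem_filter, Finset.mem_univ, true_and] at hN ⊢
    obtain ⟨hNE, -, hNU⟩ := hN
    have hne_ab : a ≠ b := hab.ne
    by_cases hmem : s(a,b) ∈ N
    · refine ⟨?_, fun _ _ x _ => Finset.mem_univ x, ?_⟩
      · -- edges
        intro e' he'
        rcases (hΦmem1 N hmem e').mp he' with ⟨e, he, hme⟩ | h | h
        · rw [Finset.mem_erase] at he
          exact hme ▸ hmedge e (hNE e he.2) he.1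
        · subst h
          exact (G'.mem_edgeSet).mpr ((ha'adj (ι a)).mpr (Or.inl rfl)).symm
        · subst h
          exact (G'.mem_edgeSet).mpr ((hb'adj (ι b)).mpr (Or.inl rfl))
      · -- uniqueness
        rintro v' -
        rcases hcover v' with ⟨v, rfl⟩ | hva' | hvb'
        on_goal 2 => subst v'
        on_goal 3 => subst v'
        · by_cases hva : v = a
          · subst hva
            refine ⟨s(ι v, a'), ⟨(hΦmem1 N hmem _).mpr (Or.inr (Or.inl rfl)),
              Sym2.mem_mk_left _ _⟩, ?_⟩
            rintro y ⟨hy, hvy⟩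
            rcases (hΦmem1 N hmem y).mp hy with ⟨e, he, hme⟩ | h | h
            · exfalso
              rw [Finset.mem_erase] at he
              have hve : v ∈ e := (hmem_m e v).mp (hme ▸ hvy)
              obtain ⟨e0, -, hu0⟩ := hNU v (Finset.mem_univ v)
              have h1 := hu0 e ⟨he.2, hve⟩
              have h2 := hu0 s(v,b) ⟨hmem, Sym2.mem_mk_left _ _⟩
              exact he.1 (h1.trans h2.symm)
            · exact h
            · exfalso
              subst h
              rw [Sym2.mem_iff] at hvy
              rcases hvy with h | h
              · exact hιa_b' h
              · exact hne_ab (hι h)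
          · by_cases hvb : v = b
            · subst hvb
              refine ⟨s(b', ι v), ⟨(hΦmem1 N hmem _).mpr (Or.inr (Or.inr rfl)),
                Sym2.mem_mk_right _ _⟩, ?_⟩
              rintro y ⟨hy, hvy⟩
              rcases (hΦmem1 N hmem y).mp hy with ⟨e, he, hme⟩ | h | h
              · exfalso
                rw [Finset.mem_erase] at he
                have hve : v ∈ e := (hmem_m e v).mp (hme ▸ hvy)
                obtain ⟨e0, -, hu0⟩ := hNU v (Finset.mem_univ v)
                have h1 := hu0 e ⟨he.2, hve⟩
                have h2 := hu0 s(a,v) ⟨hmem, Sym2.mem_mk_right _ _⟩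
                exact he.1 (h1.trans h2.symm)
              · exfalso
                subst h
                rw [Sym2.mem_iff] at hvy
                rcases hvy with h | h
                · exact hne_ab (hι h).symm
                · exact hιb_a' h
              · exact h
            · obtain ⟨e0, ⟨he0N, hve0⟩, hu0⟩ := hNU v (Finset.mem_univ v)
              have he0ne : e0 ≠ s(a,b) := by
                intro h
                subst h
                rw [Sym2.mem_iff] at hve0
                rcases hve0 with h | h
                · exact hva h
                · exact hvb h
              refine ⟨m e0, ⟨(hΦmem1 N hmem _).mpr (Or.inl ⟨e0,
                Finset.mem_erase.mpr ⟨he0ne, he0N⟩, rfl⟩), (hmem_m e0 v).mpr hve0⟩, ?_⟩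
              rintro y ⟨hy, hvy⟩
              rcases (hΦmem1 N hmem y).mp hy with ⟨e, he, hme⟩ | h | h
              · rw [Finset.mem_erase] at he
                have hve : v ∈ e := (hmem_m e v).mp (hme ▸ hvy)
                rw [← hme, hu0 e ⟨he.2, hve⟩]
              · exfalso
                subst h
                rw [Sym2.mem_iff] at hvy
                rcases hvy with h | h
                · exact hva (hι h)
                · exact ha' ⟨v, h⟩
              · exfalso
                subst h
                rw [Sym2.mem_iff] at hvy
                rcases hvy with h | h
                · exact hb' ⟨v, h⟩
                · exact hvb (hι h)
        · -- v' = a'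
          refine ⟨s(ι a, a'), ⟨(hΦmem1 N hmem _).mpr (Or.inr (Or.inl rfl)),
            Sym2.mem_mk_right _ _⟩, ?_⟩
          rintro y ⟨hy, hvy⟩
          rcases (hΦmem1 N hmem y).mp hy with ⟨e, he, hme⟩ | h | h
          · exact absurd (hme ▸ hvy) (ha'nm e)
          · exact h
          · exfalso
            subst h
            rw [Sym2.mem_iff] at hvy
            rcases hvy with h | h
            · exact hab' h
            · exact hιb_a' h.symm
        · -- v' = b'
          refine ⟨s(b', ι b), ⟨(hΦmem1 N hmem _).mpr (Or.inr (Or.inr rfl)),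
            Sym2.mem_mk_left _ _⟩, ?_⟩
          rintro y ⟨hy, hvy⟩
          rcases (hΦmem1 N hmem y).mp hy with ⟨e, he, hme⟩ | h | h
          · exact absurd (hme ▸ hvy) (hb'nm e)
          · exfalso
            subst h
            rw [Sym2.mem_iff] at hvy
            rcases hvy with h | h
            · exact hιa_b' h.symm
            · exact hab' h.symm
          · exact h
    · refine ⟨?_, fun _ _ x _ => Finset.mem_univ x, ?_⟩
      · intro e' he'
        rcases (hΦmem2 N hmem e').mp he' with ⟨e, he, hme⟩ | h
        · refine hme ▸ hmedge e (hNE e he) ?_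
          intro h; subst h; exact hmem he
        · subst h
          exact (G'.mem_edgeSet).mpr ((ha'adj b').mpr (Or.inr rfl))
      · rintro v' -
        rcases hcover v' with ⟨v, rfl⟩ | hva' | hvb'
        on_goal 2 => subst v'
        on_goal 3 => subst v'
        · obtain ⟨e0, ⟨he0N, hve0⟩, hu0⟩ := hNU v (Finset.mem_univ v)
          refine ⟨m e0, ⟨(hΦmem2 N hmem _).mpr (Or.inl ⟨e0, he0N, rfl⟩),
            (hmem_m e0 v).mpr hve0⟩, ?_⟩
          rintro y ⟨hy, hvy⟩
          rcases (hΦmem2 N hmem y).mp hy with ⟨e, he, hme⟩ | h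
          · have hve : v ∈ e := (hmem_m e v).mp (hme ▸ hvy)
            rw [← hme, hu0 e ⟨he, hve⟩]
          · exfalso
            subst h
            rw [Sym2.mem_iff] at hvy
            rcases hvy with h | h
            · exact ha' ⟨v, h⟩
            · exact hb' ⟨v, h⟩
        · refine ⟨s(a', b'), ⟨(hΦmem2 N hmem _).mpr (Or.inr rfl),
            Sym2.mem_mk_left _ _⟩, ?_⟩
          rintro y ⟨hy, hvy⟩
          rcases (hΦmem2 N hmem y).mp hy with ⟨e, he, hme⟩ | h
          · exact absurd (hme ▸ hvy) (ha'nm e)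
          · exact h
        · refine ⟨s(a', b'), ⟨(hΦmem2 N hmem _).mpr (Or.inr rfl),
            Sym2.mem_mk_right _ _⟩, ?_⟩
          rintro y ⟨hy, hvy⟩
          rcases (hΦmem2 N hmem y).mp hy with ⟨e, he, hme⟩ | h
          · exact absurd (hme ▸ hvy) (hb'nm e)
          · exact h
  · -- Ψ maps PMs of G' to PMs of G
    intro N' hN'
    simp only [Finset.mem_filter, Finset.mem_univ, true_and] at hN' ⊢
    have hst := hstruct N' hN'
    obtain ⟨hE', -, hU'⟩ := hN'
    rcases hst with ⟨h0, h1, h2⟩ | ⟨h0, h1, h2⟩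
    · rw [hΨpos N' h0]
      refine ⟨?_, fun _ _ x _ => Finset.mem_univ x, ?_⟩
      · intro e he
        exact (hmedge' e (hE' _ (Finset.mem_filter.mp he).2)).1
      · rintro v -
        obtain ⟨e', ⟨he', hve'⟩, hu'⟩ := hU' (ι v) (Finset.mem_univ _)
        have ha'e : a' ∉ e' := by
          intro hc
          rcases ha'edge e' (hE' e' he') hc with h | h
          · exact h1 (by rw [Sym2.eq_swap, ← h]; exact he')
          · subst h
            rw [Sym2.mem_iff] at hve'
            rcases hve' with h | h
            · exact ha' ⟨v, h⟩
            · exact hb' ⟨v, h⟩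
        have hb'e : b' ∉ e' := by
          intro hc
          rcases hb'edge e' (hE' e' he') hc with h | h
          · exact h2 (h ▸ he')
          · subst h
            rw [Sym2.mem_iff] at hve'
            rcases hve' with h | h
            · exact ha' ⟨v, h⟩
            · exact hb' ⟨v, h⟩
        obtain ⟨e, hme⟩ := hedgeR e' (hE' e' he') ha'e hb'e
        refine ⟨e, ⟨Finset.mem_filter.mpr ⟨Finset.mem_univ _, by rw [hme]; exact he'⟩,
          (hmem_m e v).mp (by rw [hme]; exact hve')⟩, ?_⟩
        rintro y ⟨hy, hvy⟩
        have hmy : m y ∈ N' := (Finset.mem_filter.mp hy).2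
        have h3 : m y = e' := hu' (m y) ⟨hmy, (hmem_m y v).mpr hvy⟩
        exact hminj (h3.trans hme.symm)
    · rw [hΨneg N' h0]
      refine ⟨?_, fun _ _ x _ => Finset.mem_univ x, ?_⟩
      · intro e he
        rcases Finset.mem_insert.mp he with h | h
        · exact h ▸ (G.mem_edgeSet).mpr hab
        · exact (hmedge' e (hE' _ (Finset.mem_filter.mp h).2)).1
      · rintro v -
        by_cases hva : v = a
        · refine ⟨s(a, b), ⟨Finset.mem_insert_self _ _,
            by rw [hva]; exact Sym2.mem_mk_left _ _⟩, ?_⟩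
          rintro y ⟨hy, hvy⟩
          rcases Finset.mem_insert.mp hy with h | h
          · exact h
          · exfalso
            have hmy : m y ∈ N' := (Finset.mem_filter.mp h).2
            obtain ⟨ea, -, hua⟩ := hU' (ι a) (Finset.mem_univ _)
            have h3 : m y = s(ι a, a') := (hua (m y) ⟨hmy, (hmem_m y a).mpr (hva ▸ hvy)⟩).trans
              (hua s(ι a, a') ⟨h1, Sym2.mem_mk_left _ _⟩).symm
            exact ha'nm y (by rw [h3]; exact Sym2.mem_mk_right _ _)
        · by_cases hvb : v = b
          · refine ⟨s(a, b), ⟨Finset.mem_insert_self _ _,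
              by rw [hvb]; exact Sym2.mem_mk_right _ _⟩, ?_⟩
            rintro y ⟨hy, hvy⟩
            rcases Finset.mem_insert.mp hy with h | h
            · exact h
            · exfalso
              have hmy : m y ∈ N' := (Finset.mem_filter.mp h).2
              obtain ⟨eb, -, hub⟩ := hU' (ι b) (Finset.mem_univ _)
              have h3 : m y = s(b', ι b) := (hub (m y) ⟨hmy, (hmem_m y b).mpr (hvb ▸ hvy)⟩).trans
                (hub s(b', ι b) ⟨h2, Sym2.mem_mk_right _ _⟩).symm
              exact hb'nm y (by rw [h3]; exact Sym2.mem_mk_left _ _)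
          · obtain ⟨e', ⟨he', hve'⟩, hu'v⟩ := hU' (ι v) (Finset.mem_univ _)
            have ha'e : a' ∉ e' := by
              intro hc
              rcases ha'edge e' (hE' e' he') hc with h | h
              · subst h
                rw [Sym2.mem_iff] at hve'
                rcases hve' with h | h
                · exact ha' ⟨v, h⟩
                · exact hva (hι h)
              · exact h0 (h ▸ he')
            have hb'e : b' ∉ e' := by
              intro hc
              rcases hb'edge e' (hE' e' he') hc with h | h
              · subst h
                rw [Sym2.mem_iff] at hve'
                rcases hve' with h | h
                · exact hb' ⟨v, h⟩
                · exact hvb (hι h)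
              · exact h0 (h ▸ he')
            obtain ⟨e, hme⟩ := hedgeR e' (hE' e' he') ha'e hb'e
            refine ⟨e, ⟨Finset.mem_insert_of_mem (Finset.mem_filter.mpr
              ⟨Finset.mem_univ _, by rw [hme]; exact he'⟩),
              (hmem_m e v).mp (by rw [hme]; exact hve')⟩, ?_⟩
            rintro y ⟨hy, hvy⟩
            rcases Finset.mem_insert.mp hy with h | h
            · exfalso
              subst h
              rw [Sym2.mem_iff] at hvy
              rcases hvy with h | h
              · exact hva h
              · exact hvb h
            · have hmy : m y ∈ N' := (Finset.mem_filter.mp h).2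
              have h3 : m y = e' := hu'v (m y) ⟨hmy, (hmem_m y v).mpr hvy⟩
              exact hminj (h3.trans hme.symm)
  · -- left inverse
    intro N hN
    simp only [Finset.mem_filter, Finset.mem_univ, true_and] at hN
    by_cases hmem : s(a,b) ∈ N
    · have he0 : s(a',b') ∉ Φ N := by
        intro hc
        rcases (hΦmem1 N hmem _).mp hc with ⟨e, -, hme⟩ | h | h
        · exact ha'nm e (by rw [hme]; exact Sym2.mem_mk_left _ _)
        · rw [Sym2.eq_iff] at h
          rcases h with ⟨h, -⟩ | ⟨-, h⟩
          · exact hιa_a' h.symm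
          · exact hιa_b' h.symm
        · rw [Sym2.eq_iff] at h
          rcases h with ⟨h, -⟩ | ⟨h, -⟩
          · exact hab' h
          · exact hιb_a' h.symm
      rw [hΨneg _ he0]
      have hfilt : Finset.univ.filter (fun e => m e ∈ Φ N) = N.erase s(a,b) := by
        ext e
        simp only [Finset.mem_filter, Finset.mem_univ, true_and]
        constructor
        · intro h
          rcases (hΦmem1 N hmem _).mp h with ⟨f, hf, hmf⟩ | h | h
          · exact hminj hmf ▸ hf
          · exact absurd (by rw [h]; exact Sym2.mem_mk_right _ _) (ha'nm e)
          · exact absurd (by rw [h]; exact Sym2.mem_mk_left _ _) (hb'nm e)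
        · intro h
          exact (hΦmem1 N hmem _).mpr (Or.inl ⟨e, h, rfl⟩)
      rw [hfilt, Finset.insert_erase hmem]
    · have he0 : s(a',b') ∈ Φ N := (hΦmem2 N hmem _).mpr (Or.inr rfl)
      rw [hΨpos _ he0]
      ext e
      simp only [Finset.mem_filter, Finset.mem_univ, true_and]
      constructor
      · intro h
        rcases (hΦmem2 N hmem _).mp h with ⟨f, hf, hmf⟩ | h
        · exact hminj hmf ▸ hf
        · exact absurd (by rw [h]; exact Sym2.mem_mk_left _ _) (ha'nm e)
      · intro h
        exact (hΦmem2 N hmem _).mpr (Or.inl ⟨e, h, rfl⟩)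
  · -- right inverse
    intro N' hN'
    simp only [Finset.mem_filter, Finset.mem_univ, true_and] at hN'
    have hst := hstruct N' hN'
    obtain ⟨hE', -, hU'⟩ := hN'
    have habT : s(a,b) ∉ Finset.univ.filter (fun e => m e ∈ N') := by
      intro hc
      exact (hmedge' s(a,b) (hE' _ (Finset.mem_filter.mp hc).2)).2 rfl
    rcases hst with ⟨h0, h1, h2⟩ | ⟨h0, h1, h2⟩
    · rw [hΨpos N' h0, hΦneg _ habT]
      ext e'
      simp only [Finset.mem_union, Finset.mem_image, Finset.mem_filter, Finset.mem_univ,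
        true_and, Finset.mem_singleton]
      constructor
      · rintro (⟨e, he, rfl⟩ | rfl)
        · exact he
        · exact h0
      · intro he'
        by_cases hae : a' ∈ e'
        · rcases ha'edge e' (hE' e' he') hae with h | h
          · exact absurd (show s(ι a, a') ∈ N' from by rw [Sym2.eq_swap, ← h]; exact he') h1
          · exact Or.inr h
        · by_cases hbe : b' ∈ e'
          · rcases hb'edge e' (hE' e' he') hbe with h | h
            · exact absurd (h ▸ he') h2
            · exact Or.inr h
          · obtain ⟨e, hme⟩ := hedgeR e' (hE' e' he') hae hbe
            exact Or.inl ⟨e, by rw [hme]; exact he', hme⟩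
    · rw [hΨneg N' h0]
      have hins : s(a,b) ∈ insert s(a,b) (Finset.univ.filter (fun e => m e ∈ N')) :=
        Finset.mem_insert_self _ _
      rw [hΦpos _ hins, Finset.erase_insert habT]
      ext e'
      simp only [Finset.mem_union, Finset.mem_image, Finset.mem_filter, Finset.mem_univ,
        true_and, Finset.mem_insert, Finset.mem_singleton]
      constructor
      · rintro (⟨e, he, rfl⟩ | rfl | rfl)
        · exact he
        · exact h1
        · exact h2
      · intro he'
        by_cases hae : a' ∈ e'
        · rcases ha'edge e' (hE' e' he') hae with h | h
          · refine Or.inr (Or.inl ?_)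
            rw [h]; exact Sym2.eq_swap
          · exact absurd (h ▸ he') h0
        · by_cases hbe : b' ∈ e'
          · rcases hb'edge e' (hE' e' he') hbe with h | h
            · exact Or.inr (Or.inr h)
            · exact absurd (h ▸ he') h0
          · obtain ⟨e, hme⟩ := hedgeR e' (hE' e' he') hae hbe
            exact Or.inl ⟨e, by rw [hme]; exact he', hme⟩
  · -- weights
    intro N hN
    simp only [Finset.mem_filter, Finset.mem_univ, true_and] at hN
    obtain ⟨hNE, -, -⟩ := hN
    by_cases hmem : s(a,b) ∈ N
    · have hdisj : Disjoint ((N.erase s(a,b)).image m)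
          ({s(ι a, a'), s(b', ι b)} : Finset (Sym2 V')) := by
        rw [Finset.disjoint_right]
        intro e' he' hc
        obtain ⟨e, -, hme⟩ := Finset.mem_image.mp hc
        rcases Finset.mem_insert.mp he' with h | h
        · exact ha'nm e (by rw [hme, h]; exact Sym2.mem_mk_right _ _)
        · exact hb'nm e (by rw [hme, Finset.mem_singleton.mp h]; exact Sym2.mem_mk_left _ _)
      have hne12 : s(ι a, a') ≠ s(b', ι b) := by
        intro h
        rw [Sym2.eq_iff] at h
        rcases h with ⟨h, -⟩ | ⟨-, h⟩
        · exact hιa_b' h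
        · exact hab' h
      have hpe : ∏ e ∈ N.erase s(a,b), w' (m e) = ∏ e ∈ N.erase s(a,b), w e := by
        refine Finset.prod_congr rfl ?_
        intro e he
        rw [Finset.mem_erase] at he
        exact hwm e (hNE e he.2) he.1
      rw [hΦpos N hmem, Finset.prod_union hdisj,
        Finset.prod_image (fun x _ y _ h => hminj h), Finset.prod_pair hne12, hw'a, hw'b,
        Real.mul_self_sqrt hwab, hpe, ← Finset.mul_prod_erase N w hmem, mul_comm]
    · have hdisj : Disjoint (N.image m) ({s(a', b')} : Finset (Sym2 V')) := by
        rw [Finset.disjoint_right]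
        intro e' he' hc
        obtain ⟨e, -, hme⟩ := Finset.mem_image.mp hc
        exact ha'nm e (by rw [hme, Finset.mem_singleton.mp he']; exact Sym2.mem_mk_left _ _)
      rw [hΦneg N hmem, Finset.prod_union hdisj, Finset.prod_image (fun x _ y _ h => hminj h),
        Finset.prod_singleton, hw'mid, mul_one]
      refine Finset.prod_congr rfl ?_
      intro e he
      exact (hwm e (hNE e he) (fun h => hmem (h ▸ he))).symm
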